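/- arXiv:0811.1649 — 2 statements merged into one kernel-verified Lean document; each statement's English description precedes it below -/
import Mathlib

section
/- For every ε ∈ [0,1/4], the local part of the system P^{2,ε} of two isotropic ε-PRBs equals 4ε, i.e., it is equal to the local part of a single isotropic ε-PRB. -/
open Finset

/-- n-bit strings. -/
abbrev Bits (n : ℕ) := Fin n → Bool

/-- A bipartite conditional "box" on n-bit alphabets: `P x y u v` is the
probability of outputs `(x, y)` given inputs `(u, v)`. -/
abbrev Box (n : ℕ) := Bits n → Bits n → Bits n → Bits n → ℝ

/-- `P` is a bipartite conditional probability distribution. -/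
def IsBox {n : ℕ} (P : Box n) : Prop :=
  (∀ x y u v, 0 ≤ P x y u v) ∧
  (∀ u v, ∑ x : Bits n, ∑ y : Bits n, P x y u v = 1)

/-- `P` is non-signalling. -/
def NonSignalling {n : ℕ} (P : Box n) : Prop :=
  (∀ y v u u', ∑ x : Bits n, P x y u v = ∑ x : Bits n, P x y u' v) ∧
  (∀ x u v v', ∑ y : Bits n, P x y u v = ∑ y : Bits n, P x y u v')

/-- The local deterministic box given by response functions `f` (Alice) and `g` (Bob). -/
def detBox {n : ℕ} (f g : Bits n → Bits n) : Box n :=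
  fun x y u v => if x = f u ∧ y = g v then 1 else 0

/-- `P` is local deterministic. -/
def IsLocalDet {n : ℕ} (P : Box n) : Prop :=
  ∃ f g : Bits n → Bits n, P = detBox f g

/-- `P` is local: a convex combination of local deterministic boxes. -/
def IsLocal {n : ℕ} (P : Box n) : Prop :=
  ∃ w : (Bits n → Bits n) × (Bits n → Bits n) → ℝ,
    (∀ fg, 0 ≤ w fg) ∧ (∑ fg, w fg = 1) ∧
    (∀ x y u v, P x y u v =
      ∑ fg : (Bits n → Bits n) × (Bits n → Bits n), w fg * detBox fg.1 fg.2 x y u v)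

/-- The local part of `P`: the maximal weight `p` such that `P` is a convex
combination of a local box (weight `p`) and a non-signalling box (weight `1 - p`). -/
noncomputable def localPart {n : ℕ} (P : Box n) : ℝ :=
  sSup {p : ℝ | 0 ≤ p ∧ p ≤ 1 ∧
    ∃ PL PNS : Box n, IsBox PL ∧ IsLocal PL ∧ IsBox PNS ∧ NonSignalling PNS ∧
      ∀ x y u v, P x y u v = p * PL x y u v + (1 - p) * PNS x y u v}

/-- Single-copy isotropic ε-PRB entries. -/
noncomputable def isoPRB1 (ε : ℝ) (x y u v : Bool) : ℝ :=
  if xor x y = (u && v) then (1 - ε) / 2 else ε / 2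

/-- The system of n independent isotropic ε-PRBs. -/
noncomputable def isoPRB (n : ℕ) (ε : ℝ) : Box n :=
  fun x y u v => ∏ i : Fin n, isoPRB1 ε (x i) (y i) (u i) (v i)

/-- Single-copy maximally biased δ-PRB entries. -/
noncomputable def biasedPRB1 (δ : ℝ) (x y u v : Bool) : ℝ :=
  if u && v then
    match x, y with
    | false, false => 0
    | true,  false => 1 / 2 - δ / 2
    | false, true  => 1 / 2 + δ / 2
    | true,  true  => 0
  else
    match x, y with
    | false, false => 1 / 2 - δ / 2
    | true,  false => 0
    | false, true  => δ
    | true,  true  => 1 / 2 - δ / 2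

/-- The system of n independent maximally biased δ-PRBs. -/
noncomputable def biasedPRB (n : ℕ) (δ : ℝ) : Box n :=
  fun x y u v => ∏ i : Fin n, biasedPRB1 δ (x i) (y i) (u i) (v i)

/-!
The isotropic box is the mixture `(1 - 4ε) PR + 4ε L` of the PR box and the local box `L` that
wins the CHSH game with probability `3/4`. Every local box loses the CHSH game played on the first
copy for at least one of the four input pairs, whereas `P^{n,ε}` loses it with total weight `4ε`;
this bounds every local weight by `4ε`.

For two copies, writing `L = (PR + N) / 2` with `N` the uniform box and expanding the product gives
`P^{2,ε} = (1 - 4ε) PR ⊗ PR + 4ε ((1 - 4ε) A + 4ε L ⊗ L)` with `A = (PR ⊗ N + N ⊗ PR) / 2`.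
The box `A` is local: Bob can bet on Alice's first input using his second one, and Alice on Bob's
second input using her first one, so that exactly one of the bets is right and at least one of the
two CHSH games is always won.
-/

noncomputable def prBox1 (x y u v : Bool) : ℝ := if xor x y = (u && v) then 1 / 2 else 0

noncomputable def chshLocalBox1 (x y u v : Bool) : ℝ := if xor x y = (u && v) then 3 / 8 else 1 / 8

lemma isoPRB1_eq (ε : ℝ) (x y u v : Bool) :
    isoPRB1 ε x y u v = 4 * ε * chshLocalBox1 x y u v + (1 - 4 * ε) * prBox1 x y u v := by
  unfold isoPRB1 chshLocalBox1 prBox1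
  split_ifs <;> ring

lemma classical_chsh_loses (α β : Bool → Bool) : ∃ a b, xor (α a) (β b) ≠ (a && b) := by
  revert α β
  decide

section Tensor

noncomputable def tensorPower (B : Bool → Bool → Bool → Bool → ℝ) (n : ℕ) : Box n :=
  fun x y u v => ∏ i, B (x i) (y i) (u i) (v i)

lemma sum_bits_prod {n : ℕ} (h : Fin n → Bool → ℝ) :
    ∑ x : Bits n, ∏ i, h i (x i) = ∏ i, ∑ a, h i a :=
  (Fintype.prod_sum h).symm

lemma sum_bits_sum_bits_prod {n : ℕ} (h : Fin n → Bool → Bool → ℝ) :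
    ∑ x : Bits n, ∑ y : Bits n, ∏ i, h i (x i) (y i) = ∏ i, ∑ a, ∑ b, h i a b := by
  rw [sum_congr rfl fun x _ => sum_bits_prod fun i b => h i (x i) b]
  exact sum_bits_prod fun i a => ∑ b, h i a b

variable {B : Bool → Bool → Bool → Bool → ℝ}

lemma isBox_tensorPower (h0 : ∀ x y u v, 0 ≤ B x y u v)
    (h1 : ∀ u v, ∑ x, ∑ y, B x y u v = 1) (n : ℕ) : IsBox (tensorPower B n) := by
  refine ⟨fun x y u v => prod_nonneg fun i _ => h0 _ _ _ _, fun u v => ?_⟩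
  simp only [tensorPower]
  rw [sum_bits_sum_bits_prod fun i a b => B a b (u i) (v i)]
  simp only [h1, prod_const_one]

lemma nonSignalling_tensorPower (hA : ∀ y v u u', ∑ x, B x y u v = ∑ x, B x y u' v)
    (hB : ∀ x u v v', ∑ y, B x y u v = ∑ y, B x y u v') (n : ℕ) :
    NonSignalling (tensorPower B n) := by
  constructor
  · intro y v u u'
    simp only [tensorPower]
    rw [sum_bits_prod fun i a => B a (y i) (u i) (v i),
      sum_bits_prod fun i a => B a (y i) (u' i) (v i)]
    exact prod_congr rfl fun i _ => hA _ _ _ _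
  · intro x u v v'
    simp only [tensorPower]
    rw [sum_bits_prod fun i b => B (x i) b (u i) (v i),
      sum_bits_prod fun i b => B (x i) b (u i) (v' i)]
    exact prod_congr rfl fun i _ => hB _ _ _ _

end Tensor

section Locality

variable {n : ℕ}

lemma sum_sum_detBox (f g : Bits n → Bits n) (u v : Bits n) (c : Bits n → Bits n → ℝ) :
    ∑ x, ∑ y, c x y * detBox f g x y u v = c (f u) (g v) := by
  simp [detBox, ite_and]

lemma isLocal_of_sum {ι : Type*} [Fintype ι] (c : ι → ℝ) (hc0 : ∀ i, 0 ≤ c i)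
    (hc1 : ∑ i, c i = 1) (f g : ι → Bits n → Bits n) {P : Box n}
    (hP : ∀ x y u v, P x y u v = ∑ i, c i * detBox (f i) (g i) x y u v) : IsLocal P := by
  classical
  refine ⟨fun fg => ∑ i with (f i, g i) = fg, c i, fun _ => sum_nonneg fun i _ => hc0 i,
    by rw [sum_fiberwise, hc1], fun x y u v => ?_⟩
  rw [hP, ← sum_fiberwise univ (fun i => (f i, g i))]
  refine sum_congr rfl fun fg _ => ?_
  rw [sum_mul]
  exact sum_congr rfl fun i hi => by rw [← (mem_filter.1 hi).2]

lemma IsLocal.isBox {P : Box n} (hP : IsLocal P) : IsBox P := by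
  obtain ⟨w, hw0, hw1, hw⟩ := hP
  refine ⟨fun x y u v => ?_, fun u v => ?_⟩
  · rw [hw]
    exact sum_nonneg fun fg _ => mul_nonneg (hw0 fg) (by unfold detBox; split_ifs <;> norm_num)
  · have hdet : ∀ fg : (Bits n → Bits n) × (Bits n → Bits n),
        ∑ x, ∑ y, w fg * detBox fg.1 fg.2 x y u v = w fg :=
      fun fg => sum_sum_detBox _ _ u v fun _ _ => w fg
    simp only [hw]
    rw [sum_congr rfl fun x _ => sum_comm, sum_comm]
    simp only [hdet, hw1]

lemma IsLocal.mix {P Q : Box n} (hP : IsLocal P) (hQ : IsLocal Q) {t : ℝ} (ht0 : 0 ≤ t)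
    (ht1 : t ≤ 1) : IsLocal fun x y u v => t * P x y u v + (1 - t) * Q x y u v := by
  obtain ⟨w, hw0, hw1, hw⟩ := hP
  obtain ⟨w', hw0', hw1', hw'⟩ := hQ
  refine ⟨fun fg => t * w fg + (1 - t) * w' fg,
    fun fg => add_nonneg (mul_nonneg ht0 (hw0 fg)) (mul_nonneg (by linarith) (hw0' fg)),
    by simp only [sum_add_distrib, ← mul_sum, hw1, hw1']; ring, fun x y u v => ?_⟩
  simp only [hw, hw', add_mul, sum_add_distrib, mul_assoc, mul_sum]

lemma isLocal_tensorPower {ι : Type*} [Fintype ι] (c : ι → ℝ) (hc0 : ∀ i, 0 ≤ c i)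
    (hc1 : ∑ i, c i = 1) (f g : ι → Bool → Bool) {B : Bool → Bool → Bool → Bool → ℝ}
    (hB : ∀ x y u v, B x y u v = ∑ i, c i * if x = f i u ∧ y = g i v then 1 else 0) (n : ℕ) :
    IsLocal (tensorPower B n) := by
  refine isLocal_of_sum (fun s : Fin n → ι => ∏ k, c (s k))
    (fun s => prod_nonneg fun k _ => hc0 _)
    (by simp [← Fintype.prod_sum, hc1]) (fun s u k => f (s k) (u k))
    (fun s v k => g (s k) (v k)) fun x y u v => ?_
  simp only [tensorPower, hB]
  rw [Fintype.prod_sum]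
  refine sum_congr rfl fun s _ => ?_
  rw [prod_mul_distrib, Fintype.prod_boole]
  simp only [detBox, funext_iff, forall_and]

end Locality

section ChshLoss

variable {n : ℕ} [NeZero n]

noncomputable def chshLoss : Box n →ₗ[ℝ] ℝ where
  toFun P := ∑ a : Bool, ∑ b : Bool, ∑ x : Bits n, ∑ y : Bits n,
    (if xor (x 0) (y 0) = (a && b) then 0 else 1) * P x y (fun _ => a) (fun _ => b)
  map_add' P Q := by simp only [Pi.add_apply, mul_add, sum_add_distrib]
  map_smul' r P := by
    simp only [Pi.smul_apply, smul_eq_mul, RingHom.id_apply, mul_sum, mul_left_comm]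

lemma chshLoss_apply (P : Box n) :
    chshLoss P = ∑ a : Bool, ∑ b : Bool, ∑ x : Bits n, ∑ y : Bits n,
      (if xor (x 0) (y 0) = (a && b) then 0 else 1) * P x y (fun _ => a) (fun _ => b) := rfl

lemma chshLoss_nonneg {P : Box n} (hP : ∀ x y u v, 0 ≤ P x y u v) : 0 ≤ chshLoss P :=
  (chshLoss_apply P).symm ▸ sum_nonneg fun _ _ => sum_nonneg fun _ _ =>
    sum_nonneg fun _ _ => sum_nonneg fun _ _ => mul_nonneg (by split_ifs <;> norm_num) (hP _ _ _ _)

lemma one_le_chshLoss_detBox (f g : Bits n → Bits n) : 1 ≤ chshLoss (detBox f g) := by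
  set loss : Bool → Bool → ℝ := fun a b =>
    if xor (f (fun _ => a) 0) (g (fun _ => b) 0) = (a && b) then 0 else 1 with hloss
  have hloss_nonneg : ∀ a b, 0 ≤ loss a b := fun a b => by
    simp only [hloss]
    split_ifs <;> norm_num
  obtain ⟨a, b, hab⟩ :=
    classical_chsh_loses (fun a => f (fun _ => a) 0) (fun b => g (fun _ => b) 0)
  rw [chshLoss_apply]
  simp only [sum_sum_detBox]
  calc (1 : ℝ) = loss a b := (if_neg hab).symm
    _ ≤ ∑ b', loss a b' := single_le_sum (fun b' _ => hloss_nonneg a b') (mem_univ b)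
    _ ≤ ∑ a', ∑ b', loss a' b' :=
        single_le_sum (fun a' _ => sum_nonneg fun b' _ => hloss_nonneg a' b') (mem_univ a)

lemma IsLocal.one_le_chshLoss {P : Box n} (hP : IsLocal P) : 1 ≤ chshLoss P := by
  obtain ⟨w, hw0, hw1, hw⟩ := hP
  have hP : P = ∑ fg, w fg • detBox fg.1 fg.2 := by
    ext x y u v
    simp [hw]
  rw [hP, map_sum, ← hw1]
  exact sum_le_sum fun fg _ => by
    simpa using mul_le_mul_of_nonneg_left (one_le_chshLoss_detBox fg.1 fg.2) (hw0 fg)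

lemma chshLoss_isoPRB (ε : ℝ) : chshLoss (isoPRB n ε) = 4 * ε := by
  have hcopy : ∀ a b : Bool, ∑ x : Bits n, ∑ y : Bits n,
      (if xor (x 0) (y 0) = (a && b) then 0 else 1) * isoPRB n ε x y (fun _ => a) (fun _ => b)
        = ε := by
    intro a b
    let h : Fin n → Bool → Bool → ℝ := fun i c d =>
      (if i = 0 then (if xor c d = (a && b) then 0 else 1) else 1) * isoPRB1 ε c d a b
    calc _ = ∑ x : Bits n, ∑ y : Bits n, ∏ i, h i (x i) (y i) := by
          simp only [h, isoPRB, prod_mul_distrib, prod_ite_eq', mem_univ, if_true]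
      _ = ∏ i, ∑ c, ∑ d, h i c d := sum_bits_sum_bits_prod h
      _ = ε := by
          rw [prod_eq_single 0
            (fun i _ hi => by cases a <;> cases b <;> simp [h, hi, isoPRB1] <;> ring)
            fun h0 => absurd (mem_univ 0) h0]
          cases a <;> cases b <;> simp [h, isoPRB1]
  simp only [chshLoss_apply, hcopy, sum_const, card_univ, Fintype.card_bool]
  ring

end ChshLoss

section LocalWeight

variable {n : ℕ}

def HasLocalWeight (P : Box n) (p : ℝ) : Prop :=
  0 ≤ p ∧ p ≤ 1 ∧ ∃ PL PNS : Box n, IsBox PL ∧ IsLocal PL ∧ IsBox PNS ∧ NonSignalling PNS ∧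
    ∀ x y u v, P x y u v = p * PL x y u v + (1 - p) * PNS x y u v

lemma localPart_eq_sSup (P : Box n) : localPart P = sSup {p | HasLocalWeight P p} := rfl

lemma hasLocalWeight_of_decomposition {P PL PNS : Box n} {p : ℝ} (hp0 : 0 ≤ p) (hp1 : p ≤ 1)
    (hPL : IsLocal PL) (hPNS : IsBox PNS) (hNS : NonSignalling PNS)
    (hP : ∀ x y u v, P x y u v = p * PL x y u v + (1 - p) * PNS x y u v) : HasLocalWeight P p :=
  ⟨hp0, hp1, PL, PNS, hPL.isBox, hPL, hPNS, hNS, hP⟩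

lemma HasLocalWeight.le_four_mul [NeZero n] {ε p : ℝ} (h : HasLocalWeight (isoPRB n ε) p) :
    p ≤ 4 * ε := by
  obtain ⟨hp0, hp1, PL, PNS, -, hPL, hPNS, -, hdec⟩ := h
  have hsplit : isoPRB n ε = p • PL + (1 - p) • PNS := by
    ext x y u v
    simp [hdec]
  have hloss := congrArg chshLoss hsplit
  rw [map_add, map_smul, map_smul, smul_eq_mul, smul_eq_mul, chshLoss_isoPRB] at hloss
  nlinarith [hPL.one_le_chshLoss, chshLoss_nonneg hPNS.1]

lemma localPart_isoPRB_eq [NeZero n] {ε : ℝ} (h : HasLocalWeight (isoPRB n ε) (4 * ε)) :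
    localPart (isoPRB n ε) = 4 * ε := by
  rw [localPart_eq_sSup]
  exact IsGreatest.csSup_eq ⟨h, fun _ hp => HasLocalWeight.le_four_mul hp⟩

end LocalWeight

lemma sum_prBox1_left (y u v : Bool) : ∑ x, prBox1 x y u v = 1 / 2 := by
  cases y <;> cases u <;> cases v <;> norm_num [prBox1]

lemma sum_prBox1_right (x u v : Bool) : ∑ y, prBox1 x y u v = 1 / 2 := by
  cases x <;> cases u <;> cases v <;> norm_num [prBox1]

lemma isBox_tensorPower_prBox1 (n : ℕ) : IsBox (tensorPower prBox1 n) :=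
  isBox_tensorPower (fun x y u v => by unfold prBox1; split_ifs <;> norm_num)
    (fun u v => by simp only [sum_prBox1_right]; norm_num) n

lemma nonSignalling_tensorPower_prBox1 (n : ℕ) : NonSignalling (tensorPower prBox1 n) :=
  nonSignalling_tensorPower (fun y v u u' => by rw [sum_prBox1_left, sum_prBox1_left])
    (fun x u v v' => by rw [sum_prBox1_right, sum_prBox1_right]) n

-- `x ⊕ y ⊕ u v = (u ⊕ b) (v ⊕ c)`: the strategy indexed by `(a, b, c)` loses only at `(¬b, ¬c)`.
lemma chshLocalBox1_eq_sum (x y u v : Bool) :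
    chshLocalBox1 x y u v = ∑ s : Bool × Bool × Bool,
      1 / 8 * if x = (s.1 ^^ (s.2.2 && u)) ∧ y = (s.1 ^^ (s.2.1 && (v ^^ s.2.2))) then 1 else 0 :=
    by
  have hcount : ∀ x y u v : Bool, (∑ s : Bool × Bool × Bool,
      if x = (s.1 ^^ (s.2.2 && u)) ∧ y = (s.1 ^^ (s.2.1 && (v ^^ s.2.2))) then 1 else 0 : ℕ)
        = if xor x y = (u && v) then 3 else 1 := by
    decide
  have hcount_real := congrArg (Nat.cast : ℕ → ℝ) (hcount x y u v)
  push_cast at hcount_real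
  rw [← mul_sum, hcount_real]
  unfold chshLocalBox1
  split_ifs <;> norm_num

lemma isLocal_tensorPower_chshLocalBox1 (n : ℕ) : IsLocal (tensorPower chshLocalBox1 n) :=
  isLocal_tensorPower (fun _ => 1 / 8) (fun _ => by norm_num) (by simp) _ _
    chshLocalBox1_eq_sum n

lemma hasLocalWeight_isoPRB_one {ε : ℝ} (hε0 : 0 ≤ ε) (hε : ε ≤ 1 / 4) :
    HasLocalWeight (isoPRB 1 ε) (4 * ε) :=
  hasLocalWeight_of_decomposition (by linarith) (by linarith)
    (isLocal_tensorPower_chshLocalBox1 1) (isBox_tensorPower_prBox1 1)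
    (nonSignalling_tensorPower_prBox1 1) fun x y u v => by
      simp only [isoPRB, tensorPower, Fin.prod_univ_one, isoPRB1_eq]

-- `(PR ⊗ N + N ⊗ PR) / 2`, where `N` is the uniform box.
noncomputable def mixedPRNoiseBox : Box 2 := fun x y u v =>
  ((if xor (x 0) (y 0) = (u 0 && v 0) then 1 else 0) +
    (if xor (x 1) (y 1) = (u 1 && v 1) then 1 else 0)) / 16

-- Bob bets that `u 0 = v 1 ⊕ t`, Alice that `v 1 = u 0 ⊕ t ⊕ 1`; exactly one bet is right, and
-- a right bet wins the corresponding CHSH game. The bits `c`, `a₀`, `a₁` spread out the losses.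
def guessAlice : Bool × Bool × Bool × Bool → Bits 2 → Bits 2
  | (t, c, a₀, a₁), u => ![a₀ ^^ (c && u 0), a₁ ^^ ((u 1 ^^ c) && (u 0 ^^ !t))]

def guessBob : Bool × Bool × Bool × Bool → Bits 2 → Bits 2
  | (t, c, a₀, a₁), v => ![a₀ ^^ ((v 0 ^^ c) && (v 1 ^^ t)), a₁ ^^ (c && v 1)]

lemma mixedPRNoiseBox_eq_sum (x y u v : Bits 2) :
    mixedPRNoiseBox x y u v =
      ∑ s : Bool × Bool × Bool × Bool, 1 / 16 * detBox (guessAlice s) (guessBob s) x y u v := by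
  have hcount : ∀ x y u v : Bits 2, (∑ s : Bool × Bool × Bool × Bool,
      if x = guessAlice s u ∧ y = guessBob s v then 1 else 0 : ℕ)
        = (if xor (x 0) (y 0) = (u 0 && v 0) then 1 else 0) +
          (if xor (x 1) (y 1) = (u 1 && v 1) then 1 else 0) := by
    decide
  have hcount_real := congrArg (Nat.cast : ℕ → ℝ) (hcount x y u v)
  push_cast at hcount_real
  rw [← mul_sum]
  simp only [detBox, hcount_real, mixedPRNoiseBox]
  ring

lemma isLocal_mixedPRNoiseBox : IsLocal mixedPRNoiseBox :=
  isLocal_of_sum (fun _ => 1 / 16) (fun _ => by norm_num) (by simp) _ _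
    mixedPRNoiseBox_eq_sum

lemma isoPRB_two_eq (ε : ℝ) (x y u v : Bits 2) :
    isoPRB 2 ε x y u v =
      4 * ε * ((1 - 4 * ε) * mixedPRNoiseBox x y u v
          + 4 * ε * tensorPower chshLocalBox1 2 x y u v)
        + (1 - 4 * ε) * tensorPower prBox1 2 x y u v := by
  simp only [isoPRB, tensorPower, Fin.prod_univ_two, isoPRB1_eq]
  unfold mixedPRNoiseBox chshLocalBox1 prBox1
  split_ifs <;> ring

lemma hasLocalWeight_isoPRB_two {ε : ℝ} (hε0 : 0 ≤ ε) (hε : ε ≤ 1 / 4) :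
    HasLocalWeight (isoPRB 2 ε) (4 * ε) := by
  have hPL : IsLocal fun x y u v =>
      (1 - 4 * ε) * mixedPRNoiseBox x y u v
        + (1 - (1 - 4 * ε)) * tensorPower chshLocalBox1 2 x y u v :=
    isLocal_mixedPRNoiseBox.mix (isLocal_tensorPower_chshLocalBox1 2) (by linarith) (by linarith)
  refine hasLocalWeight_of_decomposition (by linarith) (by linarith) hPL
    (isBox_tensorPower_prBox1 2) (nonSignalling_tensorPower_prBox1 2) fun x y u v => ?_
  rw [isoPRB_two_eq]
  ring

/-- the local part of two isotropic ε-PRBs is `4ε`, the same as for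
a single isotropic ε-PRB. -/
theorem stmt5 (ε : ℝ) (hε0 : 0 ≤ ε) (hε : ε ≤ 1 / 4) :
    localPart (isoPRB 2 ε) = 4 * ε ∧
    localPart (isoPRB 2 ε) = localPart (isoPRB 1 ε) := by
  have h₂ := localPart_isoPRB_eq (hasLocalWeight_isoPRB_two hε0 hε)
  have h₁ := localPart_isoPRB_eq (hasLocalWeight_isoPRB_one hε0 hε)
  exact ⟨h₂, h₂.trans h₁.symm⟩
end

section
/- There exist constants c₁ > 0 and c₂ > 0 such that for every ε ∈ [0,1/4], c₁·ε² ≤ localPart(P^{3,ε}) ≤ c₂·ε², where localPart(P^{3,ε}) denotes the local part of the system of three isotropic ε-PRBs. That is, the local part of three isotropic ε-PRBs is of order Θ(ε²). -/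
open Finset

/-!
Lower bound: some deterministic strategy loses the PR game `x ⊕ y = u ∧ v` in at most two of the
three coordinates on every input, and each such entry of `P^{3,ε}` is at least `ε²(1-ε)/8`. So a
weight `Θ(ε²)` of that deterministic box can be split off, leaving a non-signalling box.

Upper bound: given any deterministic strategy, let `y⁰, y¹` be Bob's answers on `000` and `111` and
let Alice's input be `uᵢ = ¬(y⁰ᵢ ⊕ y¹ᵢ)`. In every coordinate one of the input pairs `(u, 000)`,
`(u, 111)` errs, so one of them errs at least twice. Hence every local box puts weight `≥ 1` on the
entries with at least two errors, whereas `P^{3,ε}` puts weight `O(ε²)` there; comparing these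
weights in `P^{3,ε} = p·P_L + (1-p)·P_NS` gives `p = O(ε²)`.
-/

lemma pow_mul_pow_sub_le_pow_mul_pow_sub {a b : ℝ} (ha : 0 ≤ a) (hab : a ≤ b) {k m n : ℕ}
    (hkm : k ≤ m) (hmn : m ≤ n) : a ^ m * b ^ (n - m) ≤ a ^ k * b ^ (n - k) := by
  obtain ⟨d, rfl⟩ := Nat.exists_eq_add_of_le hkm
  have hb : 0 ≤ b := ha.trans hab
  calc a ^ (k + d) * b ^ (n - (k + d)) = a ^ k * a ^ d * b ^ (n - (k + d)) := by rw [pow_add]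
    _ ≤ a ^ k * b ^ d * b ^ (n - (k + d)) := by gcongr
    _ = a ^ k * b ^ (n - k) := by rw [mul_assoc, ← pow_add]; congr 2; omega

section LocalPart

variable {n : ℕ}

lemma NonSignalling.linear_combination {P Q : Box n} (hP : NonSignalling P)
    (hQ : NonSignalling Q) (a b : ℝ) :
    NonSignalling (fun x y u v => a * P x y u v + b * Q x y u v) := by
  constructor
  · intro y v u u'
    simp only [sum_add_distrib, ← mul_sum, hP.1 y v u u', hQ.1 y v u u']
  · intro x u v v'
    simp only [sum_add_distrib, ← mul_sum, hP.2 x u v v', hQ.2 x u v v']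

lemma detBox_sum_left (f g : Bits n → Bits n) (y u v : Bits n) :
    ∑ x, detBox f g x y u v = if y = g v then 1 else 0 := by
  by_cases hy : y = g v <;> simp [detBox, hy]

lemma detBox_sum_right (f g : Bits n → Bits n) (x u v : Bits n) :
    ∑ y, detBox f g x y u v = if x = f u then 1 else 0 := by
  by_cases hx : x = f u <;> simp [detBox, hx]

lemma detBox_nonneg (f g : Bits n → Bits n) (x y u v : Bits n) : 0 ≤ detBox f g x y u v := by
  unfold detBox; split <;> norm_num

lemma detBox_isBox (f g : Bits n → Bits n) : IsBox (detBox f g) :=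
  ⟨detBox_nonneg f g, fun u v => by simp [detBox_sum_right]⟩

lemma detBox_nonSignalling (f g : Bits n → Bits n) : NonSignalling (detBox f g) :=
  ⟨fun y v u u' => by simp only [detBox_sum_left], fun x u v v' => by simp only [detBox_sum_right]⟩

lemma detBox_isLocal (f g : Bits n → Bits n) : IsLocal (detBox f g) := by
  refine ⟨fun fg => if fg = (f, g) then 1 else 0, fun fg => by positivity, by simp, ?_⟩
  intro x y u v
  simp [ite_mul]

lemma le_localPart {P D : Box n} {p : ℝ} (hP : IsBox P) (hPns : NonSignalling P)
    (hD : IsBox D) (hDloc : IsLocal D) (hDns : NonSignalling D) (hp0 : 0 ≤ p) (hp1 : p < 1)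
    (hle : ∀ x y u v, p * D x y u v ≤ P x y u v) : p ≤ localPart P := by
  have hq : 1 - p ≠ 0 := by linarith
  set PNS : Box n := fun x y u v => (1 - p)⁻¹ * P x y u v + (-p * (1 - p)⁻¹) * D x y u v
  have hPNS : ∀ x y u v, PNS x y u v = (P x y u v - p * D x y u v) / (1 - p) := by
    intro x y u v; simp only [PNS]; ring
  have hPNS_box : IsBox PNS := by
    refine ⟨fun x y u v => ?_, fun u v => ?_⟩
    · rw [hPNS]; exact div_nonneg (by linarith [hle x y u v]) (by linarith)
    · simp only [PNS, sum_add_distrib, ← mul_sum, hP.2, hD.2]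
      field_simp
      ring
  refine le_csSup ⟨1, fun _ hq => hq.2.1⟩ ⟨hp0, hp1.le, D, PNS, hD, hDloc, hPNS_box,
    hPns.linear_combination hDns _ _, fun x y u v => ?_⟩
  rw [hPNS]
  field_simp
  ring

/-- The weight that `P` puts on a set `S` of tuples `(x, y, u, v)`. -/
def boxMass (S : Finset (Bits n × Bits n × Bits n × Bits n)) (P : Box n) : ℝ :=
  ∑ z ∈ S, P z.1 z.2.1 z.2.2.1 z.2.2.2

lemma boxMass_nonneg (S : Finset (Bits n × Bits n × Bits n × Bits n)) {P : Box n}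
    (hP : ∀ x y u v, 0 ≤ P x y u v) : 0 ≤ boxMass S P :=
  sum_nonneg fun _ _ => hP _ _ _ _

lemma one_le_boxMass_detBox {S : Finset (Bits n × Bits n × Bits n × Bits n)}
    {f g : Bits n → Bits n} {u v : Bits n} (h : (f u, g v, u, v) ∈ S) :
    1 ≤ boxMass S (detBox f g) := by
  have hz : detBox f g (f u) (g v) u v = 1 := if_pos ⟨rfl, rfl⟩
  rw [← hz]
  exact single_le_sum (f := fun z => detBox f g z.1 z.2.1 z.2.2.1 z.2.2.2)
    (fun _ _ => detBox_nonneg f g _ _ _ _) h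

lemma one_le_boxMass_of_isLocal {S : Finset (Bits n × Bits n × Bits n × Bits n)}
    (hS : ∀ f g : Bits n → Bits n, ∃ u v, (f u, g v, u, v) ∈ S) {P : Box n}
    (hP : IsLocal P) : 1 ≤ boxMass S P := by
  obtain ⟨w, hw0, hw1, hP⟩ := hP
  have hmass : boxMass S P = ∑ fg, w fg * boxMass S (detBox fg.1 fg.2) := by
    simp only [boxMass, hP, mul_sum]
    exact sum_comm
  rw [hmass, ← hw1]
  refine sum_le_sum fun fg _ => le_mul_of_one_le_right (hw0 fg) ?_
  obtain ⟨u, v, h⟩ := hS fg.1 fg.2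
  exact one_le_boxMass_detBox h

lemma localPart_le_boxMass {S : Finset (Bits n × Bits n × Bits n × Bits n)}
    (hS : ∀ f g : Bits n → Bits n, ∃ u v, (f u, g v, u, v) ∈ S) {P : Box n}
    (hP : ∀ x y u v, 0 ≤ P x y u v) : localPart P ≤ boxMass S P := by
  refine Real.sSup_le ?_ (boxMass_nonneg S hP)
  rintro p ⟨hp0, hp1, PL, PNS, -, hPL, hPNS, -, hdecomp⟩
  have hmass : boxMass S P = p * boxMass S PL + (1 - p) * boxMass S PNS := by
    simp only [boxMass, hdecomp, sum_add_distrib, mul_sum]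
  have hL := one_le_boxMass_of_isLocal hS hPL
  have hNS := boxMass_nonneg S hPNS.1
  nlinarith

end LocalPart

section IsotropicPRB

variable {n : ℕ} {ε : ℝ}

def errorCount (x y u v : Bits n) : ℕ :=
  #{i | xor (x i) (y i) ≠ (u i && v i)}

lemma exists_le_two_mul_errorCount (f g : Bits n → Bits n) :
    ∃ u v, n ≤ 2 * errorCount (f u) (g v) u v := by
  set y₀ := g fun _ => false
  set y₁ := g fun _ => true
  set u : Bits n := fun i => !(xor (y₀ i) (y₁ i))
  have hcover : ∀ i, xor (f u i) (y₀ i) ≠ (u i && false) ∨ xor (f u i) (y₁ i) ≠ (u i && true) := by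
    intro i
    simp only [u, Bool.and_false, Bool.and_true]
    generalize f u i = a; generalize y₀ i = b; generalize y₁ i = c
    revert a b c; decide
  have hsum : n ≤ errorCount (f u) y₀ u (fun _ => false) + errorCount (f u) y₁ u (fun _ => true) :=
    calc n = #(univ : Finset (Fin n)) := (card_fin n).symm
      _ ≤ _ := card_le_card fun i _ => by simpa [or_iff_not_imp_left] using hcover i
      _ ≤ _ := card_union_le _ _
  by_cases h : n ≤ 2 * errorCount (f u) y₀ u (fun _ => false)
  · exact ⟨u, fun _ => false, h⟩
  · refine ⟨u, fun _ => true, ?_⟩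
    change n ≤ 2 * errorCount (f u) y₁ u _
    omega

lemma isoPRB1_nonneg (hε0 : 0 ≤ ε) (hε1 : ε ≤ 1) (x y u v : Bool) : 0 ≤ isoPRB1 ε x y u v := by
  unfold isoPRB1; split <;> linarith

lemma isoPRB1_sum_left (y u v : Bool) : ∑ x, isoPRB1 ε x y u v = 1 / 2 := by
  cases y <;> cases u <;> cases v <;> simp [isoPRB1] <;> ring

lemma isoPRB1_sum_right (x u v : Bool) : ∑ y, isoPRB1 ε x y u v = 1 / 2 := by
  cases x <;> cases u <;> cases v <;> simp [isoPRB1] <;> ring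

lemma isoPRB_sum_left (y u v : Bits n) : ∑ x, isoPRB n ε x y u v = (1 / 2) ^ n := by
  simp only [isoPRB]
  rw [← Fintype.prod_sum fun i b => isoPRB1 ε b (y i) (u i) (v i)]
  simp only [isoPRB1_sum_left, prod_const, card_univ, Fintype.card_fin]

lemma isoPRB_sum_right (x u v : Bits n) : ∑ y, isoPRB n ε x y u v = (1 / 2) ^ n := by
  simp only [isoPRB]
  rw [← Fintype.prod_sum fun i b => isoPRB1 ε (x i) b (u i) (v i)]
  simp only [isoPRB1_sum_right, prod_const, card_univ, Fintype.card_fin]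

lemma isoPRB_isBox (hε0 : 0 ≤ ε) (hε1 : ε ≤ 1) : IsBox (isoPRB n ε) := by
  refine ⟨fun x y u v => prod_nonneg fun i _ => isoPRB1_nonneg hε0 hε1 _ _ _ _, fun u v => ?_⟩
  simp only [isoPRB_sum_right, sum_const, card_univ, Fintype.card_pi, Fintype.card_bool,
    prod_const, Fintype.card_fin, nsmul_eq_mul]
  push_cast
  rw [← mul_pow]
  norm_num

lemma isoPRB_nonSignalling : NonSignalling (isoPRB n ε) :=
  ⟨fun y v u u' => by simp only [isoPRB_sum_left], fun x u v v' => by simp only [isoPRB_sum_right]⟩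

lemma isoPRB_eq_pow_errorCount (x y u v : Bits n) :
    isoPRB n ε x y u v =
      (ε / 2) ^ errorCount x y u v * ((1 - ε) / 2) ^ (n - errorCount x y u v) := by
  have hcard := card_filter_add_card_filter_not (s := univ)
    (fun i : Fin n => xor (x i) (y i) ≠ (u i && v i))
  simp only [card_univ, Fintype.card_fin, not_not] at hcard
  simp only [isoPRB, isoPRB1, errorCount]
  rw [prod_ite, prod_const, prod_const, mul_comm]
  congr 2
  omega

lemma isoPRB_le_of_two_le_errorCount (hε0 : 0 ≤ ε) (hε1 : ε ≤ 1) {x y u v : Bits n}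
    (h : 2 ≤ errorCount x y u v) : isoPRB n ε x y u v ≤ (ε / 2) ^ 2 := by
  rw [isoPRB_eq_pow_errorCount]
  calc _ ≤ (ε / 2) ^ errorCount x y u v * 1 := by
        gcongr
        exact pow_le_one₀ (by linarith) (by linarith)
    _ ≤ (ε / 2) ^ 2 := by
        rw [mul_one]
        exact pow_le_pow_of_le_one (by positivity) (by linarith) h

def errorSet (n k : ℕ) : Finset (Bits n × Bits n × Bits n × Bits n) :=
  {z | k ≤ errorCount z.1 z.2.1 z.2.2.1 z.2.2.2}

lemma exists_mem_errorSet (f g : Bits n → Bits n) :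
    ∃ u v, (f u, g v, u, v) ∈ errorSet n ((n + 1) / 2) := by
  obtain ⟨u, v, h⟩ := exists_le_two_mul_errorCount f g
  exact ⟨u, v, by simp only [errorSet, mem_filter, mem_univ, true_and]; omega⟩

lemma boxMass_errorSet_two_isoPRB_le (hε0 : 0 ≤ ε) (hε1 : ε ≤ 1) :
    boxMass (errorSet n 2) (isoPRB n ε) ≤ 16 ^ n * (ε / 2) ^ 2 :=
  calc boxMass (errorSet n 2) (isoPRB n ε) ≤ #(errorSet n 2) • (ε / 2) ^ 2 :=
        sum_le_card_nsmul _ _ _ fun _ hz =>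
          isoPRB_le_of_two_le_errorCount hε0 hε1 (mem_filter.1 hz).2
    _ ≤ 16 ^ n * (ε / 2) ^ 2 := by
        rw [nsmul_eq_mul]
        gcongr
        calc (#(errorSet n 2) : ℝ) ≤ Fintype.card (Bits n × Bits n × Bits n × Bits n) := by
              exact_mod_cast card_le_univ _
          _ = 16 ^ n := by simp [← mul_pow]

end IsotropicPRB

def alice₀ : Bits 3 → Bits 3 := fun u i => (!(u 0) && !(u 1) && !(u 2)) && decide (i = 0)

def bob₀ : Bits 3 → Bits 3 := fun v _ => v 0 && v 1 && v 2

lemma errorCount_alice₀_bob₀_le (u v : Bits 3) : errorCount (alice₀ u) (bob₀ v) u v ≤ 2 := by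
  revert u v; decide

lemma le_isoPRB_three_of_errorCount_le {ε : ℝ} (hε0 : 0 ≤ ε) (hε : ε ≤ 1 / 4)
    {x y u v : Bits 3} (h : errorCount x y u v ≤ 2) : 3 / 32 * ε ^ 2 ≤ isoPRB 3 ε x y u v := by
  rw [isoPRB_eq_pow_errorCount]
  calc 3 / 32 * ε ^ 2 ≤ (ε / 2) ^ 2 * ((1 - ε) / 2) ^ (3 - 2) := by norm_num; nlinarith
    _ ≤ _ := pow_mul_pow_sub_le_pow_mul_pow_sub (by positivity) (by linarith) h (by norm_num)

lemma mul_detBox_alice₀_bob₀_le_isoPRB {ε : ℝ} (hε0 : 0 ≤ ε) (hε : ε ≤ 1 / 4) (x y u v : Bits 3) :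
    3 / 32 * ε ^ 2 * detBox alice₀ bob₀ x y u v ≤ isoPRB 3 ε x y u v := by
  by_cases h : x = alice₀ u ∧ y = bob₀ v
  · obtain ⟨rfl, rfl⟩ := h
    simpa [detBox] using le_isoPRB_three_of_errorCount_le hε0 hε (errorCount_alice₀_bob₀_le u v)
  · simpa [detBox, h] using (isoPRB_isBox hε0 (by linarith)).1 x y u v

/-- the local part of three isotropic ε-PRBs is `Θ(ε²)`. -/
theorem stmt8 :
    ∃ c₁ > (0 : ℝ), ∃ c₂ > (0 : ℝ), ∀ ε : ℝ, 0 ≤ ε → ε ≤ 1 / 4 →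
      c₁ * ε ^ 2 ≤ localPart (isoPRB 3 ε) ∧ localPart (isoPRB 3 ε) ≤ c₂ * ε ^ 2 := by
  refine ⟨3 / 32, by norm_num, 1024, by norm_num, fun ε hε0 hε => ⟨?_, ?_⟩⟩
  · exact le_localPart (isoPRB_isBox hε0 (by linarith)) isoPRB_nonSignalling
      (detBox_isBox alice₀ bob₀) (detBox_isLocal alice₀ bob₀) (detBox_nonSignalling alice₀ bob₀)
      (by positivity) (by nlinarith) (mul_detBox_alice₀_bob₀_le_isoPRB hε0 hε)
  · calc localPart (isoPRB 3 ε) ≤ boxMass (errorSet 3 2) (isoPRB 3 ε) :=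
          localPart_le_boxMass exists_mem_errorSet (isoPRB_isBox hε0 (by linarith)).1
      _ ≤ 16 ^ 3 * (ε / 2) ^ 2 := boxMass_errorSet_two_isoPRB_le hε0 (by linarith)
      _ = 1024 * ε ^ 2 := by ring
end
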